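/- arXiv:2409.12268 — 3 statements merged into one kernel-verified Lean document; each statement's English description precedes it below -/
import Mathlib

section
/- Let G = A ∗_C B be an amalgamated free product of countable groups, with fixed left transversals S_A of C in A and S_B of C in B both containing 1, and let ã ∈ S_A \ {1}. Then for every a ∈ S_A \ {1}, the bounded operators on ℓ²(G) satisfy D_ã − R_{a⁻¹} D_ã R_a = pr_C L_{ã⁻¹} − R_{a⁻¹} pr_C L_{ã⁻¹} R_a, where pr_C is the orthogonal projection of ℓ²(G) onto the closed subspace spanned by {δ_c : c ∈ C}. -/
noncomputable section

open ComplexConjugate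
open scoped ENNReal

local notation "⟪" x ", " y "⟫" => @inner ℂ _ _ x y

/-- ℓ²(G): square summable complex valued functions. -/
abbrev L2 (G : Type) : Type := lp (fun _ : G => ℂ) 2

/-- The standard orthonormal basis vector δ_g of ℓ²(G). -/
def delta {G : Type} (g : G) : L2 G :=
  letI := Classical.decEq G
  lp.single 2 g 1

theorem memℓp_comp_equiv {G : Type} (e : G ≃ G) (x : L2 G) :
    Memℓp (fun g => x (e g)) 2 := by
  have h2 : (0:ℝ) < (2:ℝ≥0∞).toReal := by norm_num
  rw [memℓp_gen_iff h2]
  have hx : Summable fun i => ‖x i‖ ^ (2:ℝ≥0∞).toReal := (memℓp_gen_iff h2).1 (lp.memℓp x)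
  exact (e.summable_iff (f := fun i => ‖x i‖ ^ (2:ℝ≥0∞).toReal)).2 hx

/-- The isometry of ℓ²(G) induced by precomposition with a bijection of G. -/
def lpShift {G : Type} (e : G ≃ G) : L2 G ≃ₗᵢ[ℂ] L2 G where
  toFun x := ⟨fun g => x (e g), memℓp_comp_equiv e x⟩
  invFun x := ⟨fun g => x (e.symm g), memℓp_comp_equiv e.symm x⟩
  left_inv x := by
    apply Subtype.ext
    funext g
    simp
  right_inv x := by
    apply Subtype.ext
    funext g
    simp
  map_add' x y := by
    apply Subtype.ext
    funext g
    simp only [lp.coeFn_add]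
    rfl
  map_smul' c x := by
    apply Subtype.ext
    funext g
    simp [lp.coeFn_smul, Pi.smul_apply]
  norm_map' x := by
    have h2 : (0:ℝ) < (2:ℝ≥0∞).toReal := by norm_num
    rw [lp.norm_eq_tsum_rpow h2, lp.norm_eq_tsum_rpow h2]
    congr 1
    exact e.tsum_eq (f := fun g => ‖x g‖ ^ (2:ℝ≥0∞).toReal)

/-- Right translation operator R_h : δ_g ↦ δ_{gh}. -/
def Rop {G : Type} [Group G] (h : G) : L2 G →L[ℂ] L2 G :=
  (lpShift (Equiv.mulRight h⁻¹)).toLinearIsometry.toContinuousLinearMap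

/-- Left translation operator L_h : δ_g ↦ δ_{hg}. -/
def Lop {G : Type} [Group G] (h : G) : L2 G →L[ℂ] L2 G :=
  (lpShift (Equiv.mulLeft h⁻¹)).toLinearIsometry.toContinuousLinearMap

/-- A bounded operator has finite rank if its range is finite dimensional. -/
def FiniteRank {G : Type} (T : L2 G →L[ℂ] L2 G) : Prop :=
  FiniteDimensional ℂ ↥(LinearMap.range (T : L2 G →ₗ[ℂ] L2 G))

/-- The right action T·g := R_g ∘ T ∘ R_{g⁻¹} of G on operators. -/
def opAct {G : Type} [Group G] (T : L2 G →L[ℂ] L2 G) (g : G) : L2 G →L[ℂ] L2 G :=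
  Rop g ∘L T ∘L Rop g⁻¹

/-- The subspace F(ℓ²(G))·I_{ℂ[H]}: the ℂ-linear span of the operators T - T·h with
T of finite rank and h ∈ H. -/
def FIdeal {G : Type} [Group G] (H : Subgroup G) : Submodule ℂ (L2 G →L[ℂ] L2 G) :=
  Submodule.span ℂ
    {S | ∃ (T : L2 G →L[ℂ] L2 G) (h : G), FiniteRank T ∧ h ∈ H ∧ S = T - opAct T h}

/-- The trace of a (finite rank) operator on ℓ²(G). -/
def opTrace {G : Type} (T : L2 G →L[ℂ] L2 G) : ℂ :=
  ∑' g : G, ⟪delta g, T (delta g)⟫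

/-- A word `[gₙ, …, g₂, g₁]` (with `gₙ` listed first) is in normal form with respect to
left transversals `SA`, `SB` and the amalgamated subgroup `C`: the last letter `g₁` lies
in `C`, the remaining letters are non-identity elements of `SA ∪ SB`, and consecutive
letters lie in different transversals. -/
def IsNormalWord {G : Type} [Group G] (SA SB : Set G) (C : Subgroup G) (l : List G) : Prop :=
  ∃ (l' : List G) (c : G), l = l' ++ [c] ∧ c ∈ C ∧
    (∀ x ∈ l', x ∈ SA ∪ SB ∧ x ≠ 1) ∧
    l'.Chain' fun x y => ¬(x ∈ SA ∧ y ∈ SA) ∧ ¬(x ∈ SB ∧ y ∈ SB)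

/-- The structure of an amalgamated free product `G = A ∗_C B` together with fixed left
transversals of `C` in `A` and in `B` (both containing `1`) and the resulting unique
normal form: every `g ∈ G` is uniquely written as `g = gₙ ⋯ g₂ g₁` with `g₁ ∈ C`, each
`gᵢ` (`i ≥ 2`) a non-identity element of a transversal, and consecutive letters in
different transversals.  The normal form of `g` is recorded as the list
`nf g = [gₙ, …, g₂, g₁]`; the normal form of `g` *ends in* `gₙ`, the head of `nf g`. -/
structure AmalgamatedNormalFormData (G : Type) [Group G] (A B C : Subgroup G) where
  le_A : C ≤ A
  le_B : C ≤ B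
  SA : Set G
  SB : Set G
  SA_subset : SA ⊆ (A : Set G)
  SB_subset : SB ⊆ (B : Set G)
  one_mem_SA : (1 : G) ∈ SA
  one_mem_SB : (1 : G) ∈ SB
  transversal_A : ∀ a ∈ A, ∃! p : G × G, p.1 ∈ SA ∧ p.2 ∈ C ∧ a = p.1 * p.2
  transversal_B : ∀ b ∈ B, ∃! p : G × G, p.1 ∈ SB ∧ p.2 ∈ C ∧ b = p.1 * p.2
  nf : G → List G
  nf_normal : ∀ g : G, IsNormalWord SA SB C (nf g)
  nf_prod : ∀ g : G, (nf g).prod = g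
  nf_unique : ∀ (g : G) (l : List G), IsNormalWord SA SB C l → l.prod = g → l = nf g

/-- The normal form of `g` ends in `s`. -/
def AmalgamatedNormalFormData.EndsIn {G : Type} [Group G] {A B C : Subgroup G}
    (d : AmalgamatedNormalFormData G A B C) (g s : G) : Prop :=
  (d.nf g).head? = some s

/-- The orthogonal projection of `ℓ²(G)` onto the closed subspace spanned by
`{δ_c : c ∈ C}`, as a bounded operator on `ℓ²(G)`. -/
def projC {G : Type} [Group G] (C : Subgroup G) : L2 G →L[ℂ] L2 G :=
  haveI : CompleteSpace ↥(Submodule.span ℂ (delta '' (C : Set G))).topologicalClosure :=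
    IsClosed.completeSpace_coe (hs := Submodule.isClosed_topologicalClosure _)
  (Submodule.span ℂ (delta '' (C : Set G))).topologicalClosure.subtypeL ∘L
    Submodule.orthogonalProjectionOnto (Submodule.span ℂ (delta '' (C : Set G))).topologicalClosure


/-!
`D` and `pr_C L_{a₀⁻¹}` both send `δ_g` to `δ_{a₀⁻¹ g}` or to `0`, and they agree unless the
normal form of `g` is `a₀ x ⋯` with a further letter `x ∉ A`, i.e. unless `a₀⁻¹ g` has a normal
form beginning with a letter outside `A`. So `D - pr_C L_{a₀⁻¹}` is left translation by `a₀⁻¹`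
cut down to that set of `g`, and the identity says that this operator commutes with `R_a`.
It does because right multiplication by an element of `A` only rewrites the end of a normal
form: a first letter outside `A` may be replaced, but only by another letter outside `A`
(induction on the length, peeling off the first two letters `x ∉ A`, `y ∈ SA`).
-/

section Operators

variable {G : Type}

open scoped Classical in
lemma delta_apply (g k : G) : delta g k = if k = g then 1 else 0 := by
  simp [delta, lp.single_apply, Pi.single_apply]

lemma inner_delta_left (g : G) (x : L2 G) : ⟪delta g, x⟫ = x g := by
  classical
  simp [delta, lp.inner_single_left]

lemma lpShift_delta (e : G ≃ G) (g : G) : lpShift e (delta g) = delta (e.symm g) := by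
  ext k
  change delta g (e k) = delta (e.symm g) k
  rcases eq_or_ne k (e.symm g) with rfl | hk
  · simp [delta_apply]
  · simp [delta_apply, hk, ← e.eq_symm_apply]

lemma Rop_delta [Group G] (h g : G) : Rop h (delta g) = delta (g * h) := by
  simp [Rop, lpShift_delta]

lemma Lop_delta [Group G] (h g : G) : Lop h (delta g) = delta (h * g) := by
  simp [Lop, lpShift_delta]

lemma ContinuousLinearMap.ext_delta {T S : L2 G →L[ℂ] L2 G}
    (h : ∀ g, T (delta g) = S (delta g)) : T = S := by
  classical
  refine lp.ext_continuousLinearMap ENNReal.ofNat_ne_top fun g => ?_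
  ext1
  exact h g

open scoped Classical in
lemma projC_delta [Group G] (C : Subgroup G) (g : G) :
    projC C (delta g) = if g ∈ C then delta g else 0 := by
  set K := (Submodule.span ℂ (delta '' (C : Set G))).topologicalClosure
  have : CompleteSpace K :=
    IsClosed.completeSpace_coe (hs := Submodule.isClosed_topologicalClosure _)
  change K.starProjection (delta g) = _
  split_ifs with hg
  · exact K.starProjection_eq_self_iff.mpr
      (Submodule.le_topologicalClosure _ (Submodule.subset_span ⟨g, hg, rfl⟩))
  · rw [K.starProjection_apply_eq_zero_iff, Submodule.orthogonal_closure]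
    have hortho : Submodule.span ℂ (delta '' (C : Set G)) ⟂ Submodule.span ℂ {delta g} :=
      Submodule.isOrtho_span.2 <| by
        rintro _ ⟨c, hc, rfl⟩ _ rfl
        rw [inner_delta_left, delta_apply, if_neg (by rintro rfl; exact hg hc)]
    exact hortho.symm (Submodule.mem_span_singleton_self _)

lemma Rop_inv_comp_comp_Rop_eq_self [Group G] {E : L2 G →L[ℂ] L2 G} {W : G → Prop}
    [DecidablePred W] {k a : G}
    (hE : ∀ g, E (delta g) = if W g then delta (k * g) else 0) (hW : ∀ g, W (g * a) ↔ W g) :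
    Rop a⁻¹ ∘L E ∘L Rop a = E := by
  refine ContinuousLinearMap.ext_delta fun g => ?_
  simp only [ContinuousLinearMap.comp_apply, Rop_delta, hE, hW]
  split_ifs <;> simp [Rop_delta, mul_assoc]

end Operators

section NormalWords

variable {G : Type} [Group G] {SA SB : Set G} {C : Subgroup G}

lemma isNormalWord_append_singleton_iff {l : List G} {c : G} :
    IsNormalWord SA SB C (l ++ [c]) ↔ c ∈ C ∧ (∀ x ∈ l, x ∈ SA ∪ SB ∧ x ≠ 1) ∧
      l.IsChain (fun x y => ¬(x ∈ SA ∧ y ∈ SA) ∧ ¬(x ∈ SB ∧ y ∈ SB)) := by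
  constructor
  · rintro ⟨l', c', heq, hc, hm, hch⟩
    obtain ⟨rfl, hcc⟩ := List.append_inj' heq rfl
    obtain rfl : c = c' := by simpa using hcc
    exact ⟨hc, hm, hch⟩
  · rintro ⟨hc, hm, hch⟩
    exact ⟨l, c, rfl, hc, hm, hch⟩

lemma isNormalWord_singleton_iff {c : G} : IsNormalWord SA SB C [c] ↔ c ∈ C := by
  simpa using isNormalWord_append_singleton_iff (SA := SA) (SB := SB) (l := []) (c := c)

lemma isNormalWord_pair_iff {x c : G} :
    IsNormalWord SA SB C [x, c] ↔ (x ∈ SA ∪ SB ∧ x ≠ 1) ∧ c ∈ C := by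
  simpa [and_comm] using isNormalWord_append_singleton_iff (SA := SA) (SB := SB) (l := [x]) (c := c)

lemma isNormalWord_cons_cons_iff {x y : G} {l : List G} (hl : l ≠ []) :
    IsNormalWord SA SB C (x :: y :: l) ↔ (x ∈ SA ∪ SB ∧ x ≠ 1) ∧
      (¬(x ∈ SA ∧ y ∈ SA) ∧ ¬(x ∈ SB ∧ y ∈ SB)) ∧ IsNormalWord SA SB C (y :: l) := by
  obtain ⟨l, c, rfl⟩ := l.eq_nil_or_concat'.resolve_left hl
  rw [← List.cons_append, ← List.cons_append, isNormalWord_append_singleton_iff,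
    isNormalWord_append_singleton_iff, List.forall_mem_cons, List.isChain_cons_cons]
  tauto

lemma IsNormalWord.head_mem {x : G} {l : List G} (h : IsNormalWord SA SB C (x :: l))
    (hl : l ≠ []) : x ∈ SA ∪ SB ∧ x ≠ 1 := by
  obtain ⟨l, c, rfl⟩ := l.eq_nil_or_concat'.resolve_left hl
  rw [← List.cons_append, isNormalWord_append_singleton_iff] at h
  exact h.2.1 x List.mem_cons_self

end NormalWords

namespace AmalgamatedNormalFormData

variable {G : Type} [Group G] {A B C : Subgroup G} (d : AmalgamatedNormalFormData G A B C)

lemma nf_eq_of_isNormalWord {g : G} {l : List G} (hl : IsNormalWord d.SA d.SB C l)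
    (hg : l.prod = g) : d.nf g = l :=
  (d.nf_unique g l hl hg).symm

lemma endsIn_iff {g x : G} : d.EndsIn g x ↔ ∃ l, d.nf g = x :: l :=
  List.head?_eq_some_iff

lemma notMem_of_mem_SB {x : G} (hxB : x ∈ d.SB) (hxA : x ∉ d.SA) : x ∉ A := by
  intro hx
  obtain ⟨⟨s, c⟩, ⟨hs, hc, hxsc⟩, -⟩ := d.transversal_A x hx
  dsimp only at hs hc hxsc
  have hx1 : x ≠ 1 := fun h => hxA (h ▸ d.one_mem_SA)
  have hnf : d.nf x = [x, 1] :=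
    d.nf_eq_of_isNormalWord (isNormalWord_pair_iff.2 ⟨⟨Or.inr hxB, hx1⟩, one_mem C⟩) (by simp)
  by_cases hs1 : s = 1
  · have := d.nf_eq_of_isNormalWord (isNormalWord_singleton_iff.2 hc) (g := x) (by simp [hxsc, hs1])
    simp [hnf] at this
  · have := d.nf_eq_of_isNormalWord (isNormalWord_pair_iff.2 ⟨⟨Or.inl hs, hs1⟩, hc⟩) (g := x)
      (by simp [hxsc])
    rw [hnf] at this
    exact hxA ((List.cons_eq_cons.1 this).1 ▸ hs)

lemma nf_eq_cons_of_notMem {g x : G} {l : List G} (h : d.nf g = x :: l) (hx : x ∉ A) :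
    l ≠ [] ∧ x ∈ d.SB ∧ x ∉ d.SA := by
  have hnormal := h ▸ d.nf_normal g
  have hl : l ≠ [] := by
    rintro rfl
    exact hx (d.le_A (isNormalWord_singleton_iff.1 hnormal))
  have hxA : x ∉ d.SA := fun hxA => hx (d.SA_subset hxA)
  exact ⟨hl, (hnormal.head_mem hl).1.resolve_left hxA, hxA⟩

lemma exists_endsIn_notMem_mul_of_mem_SB {x u : G} (hxB : x ∈ d.SB) (hxA : x ∉ d.SA)
    (hu : u ∈ A) : ∃ y ∉ A, d.EndsIn (x * u) y := by
  have hx : x ∉ A := d.notMem_of_mem_SB hxB hxA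
  have hx1 : x ≠ 1 := fun h => hx (h ▸ one_mem A)
  obtain ⟨⟨s, c⟩, ⟨hs, hc, rfl⟩, -⟩ := d.transversal_A u hu
  dsimp only at hs hc ⊢
  by_cases hsB : s ∈ d.SB
  · obtain ⟨⟨v, c'⟩, ⟨hv, hc', hxs⟩, -⟩ :=
      d.transversal_B (x * s) (mul_mem (d.SB_subset hxB) (d.SB_subset hsB))
    dsimp only at hv hc' hxs
    have hvA : v ∉ A := fun hvA => hx <| by
      rw [show x = v * c' * s⁻¹ by rw [← hxs]; group]
      exact mul_mem (mul_mem hvA (d.le_A hc')) (inv_mem (d.SA_subset hs))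
    have hv1 : v ≠ 1 := fun h => hvA (h ▸ one_mem A)
    refine ⟨v, hvA, d.endsIn_iff.2 ⟨[c' * c], d.nf_eq_of_isNormalWord
      (isNormalWord_pair_iff.2 ⟨⟨Or.inr hv, hv1⟩, mul_mem hc' hc⟩) ?_⟩⟩
    simp [← mul_assoc, ← hxs]
  · have hs1 : s ≠ 1 := fun h => hsB (h ▸ d.one_mem_SB)
    refine ⟨x, hx, d.endsIn_iff.2 ⟨[s, c], d.nf_eq_of_isNormalWord ?_ (by simp)⟩⟩
    rw [isNormalWord_cons_cons_iff (List.cons_ne_nil _ _), isNormalWord_pair_iff]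
    exact ⟨⟨Or.inr hxB, hx1⟩, ⟨fun h => hxA h.1, fun h => hsB h.2⟩, ⟨Or.inl hs, hs1⟩, hc⟩

lemma exists_endsIn_notMem_mul {h t : G} (hh : ∃ x ∉ A, d.EndsIn h x) (ht : t ∈ A) :
    ∃ x ∉ A, d.EndsIn (h * t) x := by
  induction hn : (d.nf h).length using Nat.strong_induction_on generalizing h with
  | _ n ih =>
  obtain ⟨x, hx, hxh⟩ := hh
  obtain ⟨l, hnf⟩ := d.endsIn_iff.1 hxh
  obtain ⟨hl, hxB, hxA⟩ := d.nf_eq_cons_of_notMem hnf hx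
  have hx1 : x ≠ 1 := fun h => hx (h ▸ one_mem A)
  have hnormal : IsNormalWord d.SA d.SB C (x :: l) := hnf ▸ d.nf_normal h
  have hprod : (x :: l).prod = h := hnf ▸ d.nf_prod h
  match l, hl, hnormal, hprod with
  | [c], _, hnormal, hprod =>
    have hc := (isNormalWord_pair_iff.1 hnormal).2
    simpa [← hprod, mul_assoc] using
      d.exists_endsIn_notMem_mul_of_mem_SB hxB hxA (mul_mem (d.le_A hc) ht)
  | [y, c], _, hnormal, hprod =>
    obtain ⟨-, hxy, hyc⟩ := (isNormalWord_cons_cons_iff (List.cons_ne_nil _ _)).1 hnormal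
    obtain ⟨⟨hyAB, -⟩, hc⟩ := isNormalWord_pair_iff.1 hyc
    have hyA : y ∈ d.SA := hyAB.resolve_right fun hyB => hxy.2 ⟨hxB, hyB⟩
    simpa [← hprod, mul_assoc] using d.exists_endsIn_notMem_mul_of_mem_SB hxB hxA
      (mul_mem (d.SA_subset hyA) (mul_mem (d.le_A hc) ht))
  | y :: z :: w :: l', _, hnormal, hprod =>
    obtain ⟨-, hxy, hyzw⟩ := (isNormalWord_cons_cons_iff (List.cons_ne_nil _ _)).1 hnormal
    obtain ⟨⟨hyAB, hy1⟩, hyz, hzw⟩ := (isNormalWord_cons_cons_iff (List.cons_ne_nil _ _)).1 hyzw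
    have hyB : y ∉ d.SB := fun hyB => hxy.2 ⟨hxB, hyB⟩
    have hyA : y ∈ d.SA := hyAB.resolve_right hyB
    have hzA : z ∉ d.SA := fun hzA => hyz.1 ⟨hyA, hzA⟩
    have hzB : z ∈ d.SB := (hzw.head_mem (List.cons_ne_nil _ _)).1.resolve_left hzA
    have hnf' : d.nf (z :: w :: l').prod = z :: w :: l' := d.nf_eq_of_isNormalWord hzw rfl
    obtain ⟨z', hz', hz'h⟩ := ih (z :: w :: l').length (by simp [← hn, hnf])
      ⟨z, d.notMem_of_mem_SB hzB hzA, d.endsIn_iff.2 ⟨_, hnf'⟩⟩ (by rw [hnf'])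
    obtain ⟨l'', hnf''⟩ := d.endsIn_iff.1 hz'h
    obtain ⟨hl'', -, hz'A⟩ := d.nf_eq_cons_of_notMem hnf'' hz'
    refine ⟨x, hx, d.endsIn_iff.2 ⟨y :: z' :: l'', d.nf_eq_of_isNormalWord ?_ ?_⟩⟩
    · rw [isNormalWord_cons_cons_iff (List.cons_ne_nil _ _), isNormalWord_cons_cons_iff hl'']
      exact ⟨⟨Or.inr hxB, hx1⟩, hxy, ⟨hyAB, hy1⟩, ⟨fun h => hz'A h.2, fun h => hyB h.1⟩,
        hnf'' ▸ d.nf_normal _⟩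
    · rw [List.prod_cons, List.prod_cons, ← hnf'', d.nf_prod, ← hprod]
      simp [mul_assoc]

lemma exists_endsIn_notMem_mul_iff {h t : G} (ht : t ∈ A) :
    (∃ x ∉ A, d.EndsIn (h * t) x) ↔ ∃ x ∉ A, d.EndsIn h x :=
  ⟨fun H => by simpa using d.exists_endsIn_notMem_mul H (inv_mem ht),
    fun H => d.exists_endsIn_notMem_mul H ht⟩

lemma endsIn_of_inv_mul_mem {a₀ g : G} (ha₀ : a₀ ∈ d.SA) (ha₀1 : a₀ ≠ 1) (hg : a₀⁻¹ * g ∈ C) :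
    d.EndsIn g a₀ :=
  d.endsIn_iff.2 ⟨[a₀⁻¹ * g], d.nf_eq_of_isNormalWord
    (isNormalWord_pair_iff.2 ⟨⟨Or.inl ha₀, ha₀1⟩, hg⟩) (by simp)⟩

lemma endsIn_and_inv_mul_notMem_iff {a₀ g : G} (ha₀ : a₀ ∈ d.SA) :
    (d.EndsIn g a₀ ∧ a₀⁻¹ * g ∉ C) ↔ a₀ ∉ d.SB ∧ ∃ x ∉ A, d.EndsIn (a₀⁻¹ * g) x := by
  constructor
  · rintro ⟨hg, hgC⟩
    obtain ⟨l, hnf⟩ := d.endsIn_iff.1 hg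
    have hnormal : IsNormalWord d.SA d.SB C (a₀ :: l) := hnf ▸ d.nf_normal g
    have hprod : l.prod = a₀⁻¹ * g := by rw [← d.nf_prod g, hnf]; simp
    match l, hnormal, hprod with
    | [], _, hprod => exact absurd (hprod ▸ one_mem C) hgC
    | [c], hnormal, hprod =>
      rw [List.prod_singleton] at hprod
      exact absurd (hprod ▸ (isNormalWord_pair_iff.1 hnormal).2) hgC
    | x :: y :: l', hnormal, hprod =>
      obtain ⟨-, hsep, hxl⟩ := (isNormalWord_cons_cons_iff (List.cons_ne_nil _ _)).1 hnormal
      have hxA : x ∉ d.SA := fun hxA => hsep.1 ⟨ha₀, hxA⟩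
      have hxB : x ∈ d.SB := (hxl.head_mem (List.cons_ne_nil _ _)).1.resolve_left hxA
      exact ⟨fun h => hsep.2 ⟨h, hxB⟩, x, d.notMem_of_mem_SB hxB hxA,
        d.endsIn_iff.2 ⟨_, d.nf_eq_of_isNormalWord hxl hprod⟩⟩
  · rintro ⟨ha₀B, x, hx, hxg⟩
    obtain ⟨l, hnf⟩ := d.endsIn_iff.1 hxg
    obtain ⟨hl, -, hxA⟩ := d.nf_eq_cons_of_notMem hnf hx
    refine ⟨d.endsIn_iff.2 ⟨x :: l, d.nf_eq_of_isNormalWord ?_ ?_⟩, fun hC => hl ?_⟩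
    · rw [isNormalWord_cons_cons_iff hl]
      exact ⟨⟨Or.inl ha₀, fun h => ha₀B (h ▸ d.one_mem_SB)⟩, ⟨fun h => hxA h.2, fun h => ha₀B h.1⟩,
        hnf ▸ d.nf_normal _⟩
    · rw [List.prod_cons, ← hnf, d.nf_prod, mul_inv_cancel_left]
    · have := d.nf_eq_of_isNormalWord (isNormalWord_singleton_iff.2 hC) List.prod_singleton
      exact (List.cons_eq_cons.1 (hnf.symm.trans this)).2

lemma endsIn_and_inv_mul_notMem_mul_iff {a₀ g t : G} (ha₀ : a₀ ∈ d.SA) (ht : t ∈ A) :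
    (d.EndsIn (g * t) a₀ ∧ a₀⁻¹ * (g * t) ∉ C) ↔ (d.EndsIn g a₀ ∧ a₀⁻¹ * g ∉ C) := by
  rw [d.endsIn_and_inv_mul_notMem_iff ha₀, d.endsIn_and_inv_mul_notMem_iff ha₀, ← mul_assoc,
    d.exists_endsIn_notMem_mul_iff ht]

end AmalgamatedNormalFormData

theorem Da_commutator_eq_projC_commutator_general
    {G : Type} [Group G] (A B C : Subgroup G)
    (d : AmalgamatedNormalFormData G A B C)
    (a₀ : G) (ha₀ : a₀ ∈ d.SA) (ha₀1 : a₀ ≠ 1)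
    (D : L2 G →L[ℂ] L2 G)
    (hD1 : ∀ g : G, d.EndsIn g a₀ → D (delta g) = delta (a₀⁻¹ * g))
    (hD2 : ∀ g : G, ¬ d.EndsIn g a₀ → D (delta g) = 0)
    (a : G) (ha : a ∈ d.SA) :
    D - Rop a⁻¹ ∘L D ∘L Rop a =
      projC C ∘L Lop a₀⁻¹ - Rop a⁻¹ ∘L projC C ∘L Lop a₀⁻¹ ∘L Rop a := by
  classical
  set E := D - projC C ∘L Lop a₀⁻¹
  have hE : ∀ g, E (delta g) =
      if d.EndsIn g a₀ ∧ a₀⁻¹ * g ∉ C then delta (a₀⁻¹ * g) else 0 := by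
    intro g
    simp only [E, sub_apply, ContinuousLinearMap.comp_apply, Lop_delta, projC_delta]
    by_cases hC : a₀⁻¹ * g ∈ C
    · simp [hC, hD1 g (d.endsIn_of_inv_mul_mem ha₀ ha₀1 hC)]
    · by_cases hg : d.EndsIn g a₀
      · simp [hC, hg, hD1 g hg]
      · simp [hC, hg, hD2 g hg]
  have hRE : Rop a⁻¹ ∘L E ∘L Rop a = E :=
    Rop_inv_comp_comp_Rop_eq_self (W := fun g => d.EndsIn g a₀ ∧ a₀⁻¹ * g ∉ C) hE
      fun g => d.endsIn_and_inv_mul_notMem_mul_iff ha₀ (d.SA_subset ha)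
  rw [sub_eq_sub_iff_sub_eq_sub]
  calc E = Rop a⁻¹ ∘L E ∘L Rop a := hRE.symm
    _ = _ := by simp only [E, ContinuousLinearMap.comp_sub, ContinuousLinearMap.sub_comp,
      ContinuousLinearMap.comp_assoc]

/-- Let `G = A ∗_C B` with fixed left transversals `S_A`, `S_B` both
containing `1`, let `a₀ ∈ S_A \\ {1}` and let `D` be the bounded operator on `ℓ²(G)` with
`D δ_g = δ_{a₀⁻¹ g}` if the normal form of `g` ends in `a₀` and `D δ_g = 0` otherwise.
Then for every `a ∈ S_A \\ {1}`,
`D − R_{a⁻¹} D R_a = pr_C L_{a₀⁻¹} − R_{a⁻¹} pr_C L_{a₀⁻¹} R_a`,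
where `pr_C` is the orthogonal projection onto the closed span of `{δ_c : c ∈ C}`. -/
theorem Da_commutator_eq_projC_commutator
    {G : Type} [Group G] [Countable G] (A B C : Subgroup G)
    (d : AmalgamatedNormalFormData G A B C)
    (a₀ : G) (ha₀ : a₀ ∈ d.SA) (ha₀1 : a₀ ≠ 1)
    (D : L2 G →L[ℂ] L2 G)
    (hD1 : ∀ g : G, d.EndsIn g a₀ → D (delta g) = delta (a₀⁻¹ * g))
    (hD2 : ∀ g : G, ¬ d.EndsIn g a₀ → D (delta g) = 0)
    (a : G) (ha : a ∈ d.SA) (ha1 : a ≠ 1) :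
    D - Rop a⁻¹ ∘L D ∘L Rop a =
      projC C ∘L Lop a₀⁻¹ - Rop a⁻¹ ∘L projC C ∘L Lop a₀⁻¹ ∘L Rop a :=
  Da_commutator_eq_projC_commutator_general A B C d a₀ ha₀ ha₀1 D hD1 hD2 a ha

end
end

section
/- Let G be a countable group and A a subgroup of G. Let α : ℓ²(G) ⊗_ℂ ℓ²(G) → B(ℓ²(G)) be the injective ℂ-linear map determined by α(v ⊗ u)(x) = ⟨x, u*⟩ v, where u*(g) is the conjugate of u(g⁻¹). Then α maps the ℂ-subspace of ℓ²(G) ⊗_ℂ ℓ²(G) spanned by the elements R_a v ⊗ u − v ⊗ L_a u (for u, v ∈ ℓ²(G) and a ∈ A) bijectively onto F(ℓ²(G))·I_{ℂ[A]}. -/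
noncomputable section

open ComplexConjugate
open scoped ENNReal

local notation "⟪" x ", " y "⟫" => @inner ℂ _ _ x y

/-- The vector `u* ∈ ℓ²(G)`, `u*(g) = conj (u g⁻¹)`. -/
def starVec {G : Type} [Group G] (u : L2 G) : L2 G :=
  ⟨fun g => starRingEnd ℂ (u g⁻¹), by
    show Memℓp _ 2
    have h2 : (0:ℝ) < (2:ℝ≥0∞).toReal := by norm_num
    rw [memℓp_gen_iff h2]
    have h' : Summable fun g : G => ‖u g⁻¹‖ ^ (2:ℝ≥0∞).toReal :=
      ((Equiv.inv G).summable_iff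
        (f := fun g : G => ‖u g‖ ^ (2:ℝ≥0∞).toReal)).2
        ((memℓp_gen_iff h2).1 (lp.memℓp u))
    refine h'.congr fun g => ?_
    simp⟩

theorem starVec_apply {G : Type} [Group G] (u : L2 G) (g : G) :
    starVec u g = starRingEnd ℂ (u g⁻¹) := rfl

theorem starVec_add {G : Type} [Group G] (u v : L2 G) :
    starVec (u + v) = starVec u + starVec v := by
  apply Subtype.ext
  funext g
  simp only [lp.coeFn_add]
  show starRingEnd ℂ ((u + v) g⁻¹) = starRingEnd ℂ (u g⁻¹) + starRingEnd ℂ (v g⁻¹)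
  rw [lp.coeFn_add]
  simp

theorem starVec_smul {G : Type} [Group G] (c : ℂ) (u : L2 G) :
    starVec (c • u) = starRingEnd ℂ c • starVec u := by
  apply Subtype.ext
  funext g
  show starRingEnd ℂ ((c • u) g⁻¹) = (starRingEnd ℂ c • starVec u) g
  rw [lp.coeFn_smul, lp.coeFn_smul]
  simp [starVec_apply]

/-- The ℂ-linear map `α : ℓ²(G) ⊗_ℂ ℓ²(G) → B(ℓ²(G))` determined on elementary tensors
by `α(v ⊗ u)(x) = ⟨x, u*⟩ v`. -/
def alphaMap (G : Type) [Group G] :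
    TensorProduct ℂ (L2 G) (L2 G) →ₗ[ℂ] (L2 G →L[ℂ] L2 G) :=
  TensorProduct.lift
    { toFun := fun v =>
        { toFun := fun u => (innerSL ℂ (starVec u)).smulRight v
          map_add' := fun u u' => by
            ext x
            simp [starVec_add, inner_add_left, add_mul, lp.coeFn_add, lp.coeFn_smul, Pi.add_apply,
              Pi.smul_apply, smul_eq_mul] <;> rfl
          map_smul' := fun c u => by
            ext x
            simp [starVec_smul, inner_smul_left, mul_smul] }
      map_add' := fun v v' => by
        ext u x
        simp [smul_add]
      map_smul' := fun c v => by
        refine LinearMap.ext fun u => ?_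
        refine ContinuousLinearMap.ext fun x => ?_
        show (inner ℂ (starVec u) x : ℂ) • (c • v) = c • ((inner ℂ (starVec u) x : ℂ) • v)
        exact smul_comm _ _ _ }

/-! Under `α`, the action `T ↦ T·h` on operators corresponds to `v ⊗ u ↦ R_h v ⊗ L_{h⁻¹} u` on
tensors, and the generators `R_a v ⊗ u − v ⊗ L_a u` are exactly the elements `w − w·a⁻¹` with `w`
an elementary tensor. So `α` carries their span onto the span of the `T − T·h` with `T` in the
image of an elementary tensor; these `T` have rank one, and conversely every finite rank operator
is a sum `x ↦ ∑ ⟪x, y_i⟫ w_i` over a basis `(w_i)` of its range (Riesz), hence lies in the image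
of `α`. Injectivity: writing `z = ∑ v_i ⊗ b_i` over a basis `(b_i)` of `ℓ²(G)`, the functionals
`⟪·, b_i*⟫` are linearly independent, so `α z = 0` forces every `v_i = 0`. -/

theorem LinearIndependent.eq_zero_of_forall_sum_smul_eq_zero {ι α K V : Type*} [Fintype ι]
    [Field K] [AddCommGroup V] [Module K V] {f : ι → α → K} (hf : LinearIndependent K f)
    {v : ι → V} (h : ∀ a, ∑ i, f i a • v i = 0) (i : ι) : v i = 0 := by
  classical
  -- the vectors `(f i a)ᵢ` span `ι → K`, and `c ↦ ∑ cᵢ • vᵢ` vanishes on each of them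
  have hker :
      Submodule.span K (Set.range (flip f)) ≤ LinearMap.ker (Fintype.linearCombination K v) := by
    rw [Submodule.span_le]
    rintro _ ⟨a, rfl⟩
    simpa [Fintype.linearCombination_apply, flip] using h a
  rw [span_flip_eq_top_iff_linearIndependent.mpr hf] at hker
  simpa using hker (Submodule.mem_top (x := Pi.single i 1))

section

variable {G : Type} [Group G]

theorem Rop_apply (h : G) (x : L2 G) (g : G) : Rop h x g = x (g * h⁻¹) := rfl

theorem Lop_apply (h : G) (x : L2 G) (g : G) : Lop h x g = x (h⁻¹ * g) := rfl

theorem Rop_inv_Rop (a : G) (x : L2 G) : Rop a⁻¹ (Rop a x) = x := by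
  ext g
  simp [Rop_apply]

theorem Rop_Rop_inv (a : G) (x : L2 G) : Rop a (Rop a⁻¹ x) = x := by
  ext g
  simp [Rop_apply]

theorem inner_Rop_left (a : G) (w x : L2 G) : ⟪Rop a w, x⟫ = ⟪w, Rop a⁻¹ x⟫ := by
  conv_lhs => rw [← Rop_Rop_inv a x]
  exact (lpShift (Equiv.mulRight a⁻¹)).inner_map_map w _

theorem starVec_starVec (u : L2 G) : starVec (starVec u) = u := by
  ext g
  simp [starVec_apply]

theorem starVec_zero : starVec (0 : L2 G) = 0 := by
  ext g
  simp [starVec_apply]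

theorem starVec_Lop (a : G) (u : L2 G) : starVec (Lop a u) = Rop a⁻¹ (starVec u) := by
  ext g
  simp [starVec_apply, Lop_apply, Rop_apply, mul_inv_rev]

-- `ℂ`-linear because `u ↦ u*` and the first slot of `⟪·, ·⟫` are both conjugate-linear.
def starDual : L2 G →ₗ[ℂ] (L2 G → ℂ) where
  toFun u x := ⟪starVec u, x⟫
  map_add' u u' := by
    ext x
    simp [starVec_add]
  map_smul' c u := by
    ext x
    simp [starVec_smul, mul_comm]

theorem starDual_injective : Function.Injective (starDual : L2 G →ₗ[ℂ] (L2 G → ℂ)) := by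
  rw [← LinearMap.ker_eq_bot, LinearMap.ker_eq_bot']
  intro u hu
  have hstar : starVec u = 0 := inner_self_eq_zero.mp (congrFun hu (starVec u))
  rw [← starVec_starVec u, hstar, starVec_zero]

theorem alphaMap_tmul_apply (v u x : L2 G) :
    alphaMap G (v ⊗ₜ[ℂ] u) x = starDual u x • v := rfl

theorem alphaMap_injective : Function.Injective (alphaMap G) := by
  classical
  let b := Module.Basis.ofVectorSpace ℂ (L2 G)
  rw [← LinearMap.ker_eq_bot, LinearMap.ker_eq_bot']
  intro z hz
  obtain ⟨c, rfl⟩ := TensorProduct.eq_repr_basis_right b z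
  suffices c = 0 by simp [this]
  refine Finsupp.ext fun i => by_contra fun hi => ?_
  have hli : LinearIndependent ℂ fun j : c.support => starDual (b j) :=
    (b.linearIndependent.comp _ Subtype.val_injective).map' _
      (LinearMap.ker_eq_bot.mpr starDual_injective)
  refine hi (hli.eq_zero_of_forall_sum_smul_eq_zero (v := fun j => c j) (fun x => ?_)
    ⟨i, Finsupp.mem_support_iff.mpr hi⟩)
  rw [Finset.sum_coe_sort c.support fun j => starDual (b j) x • c j]
  simpa [Finsupp.sum, map_sum, alphaMap_tmul_apply] using congr($hz x)

theorem finiteRank_alphaMap_tmul (v u : L2 G) : FiniteRank (alphaMap G (v ⊗ₜ[ℂ] u)) := by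
  have hle : LinearMap.range (alphaMap G (v ⊗ₜ[ℂ] u) : L2 G →ₗ[ℂ] L2 G) ≤ ℂ ∙ v := by
    rintro _ ⟨x, rfl⟩
    exact Submodule.smul_mem _ _ (Submodule.mem_span_singleton_self v)
  exact Submodule.finiteDimensional_of_le hle

theorem exists_alphaMap_eq_of_finiteRank {T : L2 G →L[ℂ] L2 G} (hT : FiniteRank T) :
    ∃ z, alphaMap G z = T := by
  let W := LinearMap.range (T : L2 G →ₗ[ℂ] L2 G)
  have : FiniteDimensional ℂ W := hT
  let b := Module.finBasis ℂ W
  let T' : L2 G →L[ℂ] W := T.codRestrict W fun x => LinearMap.mem_range_self _ x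
  let y i := (InnerProductSpace.toDual ℂ (L2 G)).symm ((b.coord i).toContinuousLinearMap ∘L T')
  refine ⟨∑ i, (b i : L2 G) ⊗ₜ[ℂ] starVec (y i), ContinuousLinearMap.ext fun x => ?_⟩
  have hy i : ⟪y i, x⟫ = b.repr (T' x) i := InnerProductSpace.toDual_symm_apply
  simp only [map_sum, FunLike.coe_sum, Finset.sum_apply, alphaMap_tmul_apply, starDual,
    LinearMap.coe_mk, AddHom.coe_mk, starVec_starVec, hy]
  simp_rw [← Submodule.coe_smul, ← Submodule.coe_sum, b.sum_repr]
  rfl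

theorem opAct_alphaMap (h : G) (z : TensorProduct ℂ (L2 G) (L2 G)) :
    opAct (alphaMap G z) h =
      alphaMap G (TensorProduct.map (Rop h : L2 G →ₗ[ℂ] L2 G) (Lop h⁻¹) z) := by
  induction z using TensorProduct.induction_on with
  | zero => ext; simp [opAct]
  | tmul v u =>
    ext x
    simp [opAct, alphaMap_tmul_apply, starDual, starVec_Lop, inner_Rop_left]
  | add z z' hz hz' =>
    simp only [map_add, ← hz, ← hz', opAct, ContinuousLinearMap.add_comp,
      ContinuousLinearMap.comp_add]

def balancingSpan (A : Subgroup G) : Submodule ℂ (TensorProduct ℂ (L2 G) (L2 G)) :=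
  Submodule.span ℂ
    {z : TensorProduct ℂ (L2 G) (L2 G) |
      ∃ (u v : L2 G) (a : G), a ∈ A ∧
        z = TensorProduct.tmul ℂ (Rop a v) u - TensorProduct.tmul ℂ v (Lop a u)}

theorem sub_map_mem_balancingSpan {A : Subgroup G} {h : G} (hh : h ∈ A)
    (z : TensorProduct ℂ (L2 G) (L2 G)) :
    z - TensorProduct.map (Rop h : L2 G →ₗ[ℂ] L2 G) (Lop h⁻¹) z ∈ balancingSpan A := by
  induction z using TensorProduct.induction_on with
  | zero => simp
  | tmul v u =>
    refine Submodule.subset_span ⟨u, Rop h v, h⁻¹, A.inv_mem hh, ?_⟩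
    rw [Rop_inv_Rop, TensorProduct.map_tmul, ContinuousLinearMap.coe_coe,
      ContinuousLinearMap.coe_coe]
  | add z z' hz hz' =>
    rw [map_add, add_sub_add_comm]
    exact add_mem hz hz'

theorem alphaMap_Rop_tmul_sub_tmul_Lop (a : G) (v u : L2 G) :
    alphaMap G (Rop a v ⊗ₜ[ℂ] u - v ⊗ₜ[ℂ] Lop a u) =
      alphaMap G (Rop a v ⊗ₜ[ℂ] u) - opAct (alphaMap G (Rop a v ⊗ₜ[ℂ] u)) a⁻¹ := by
  rw [opAct_alphaMap, TensorProduct.map_tmul, ContinuousLinearMap.coe_coe,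
    ContinuousLinearMap.coe_coe, inv_inv, Rop_inv_Rop, map_sub]

end

theorem alphaMap_span_eq_fideal_general (G : Type) [Group G] (A : Subgroup G) :
    Function.Injective (alphaMap G) ∧
      Submodule.map (alphaMap G)
        (Submodule.span ℂ
          {z : TensorProduct ℂ (L2 G) (L2 G) |
            ∃ (u v : L2 G) (a : G), a ∈ A ∧
              z = TensorProduct.tmul ℂ (Rop a v) u - TensorProduct.tmul ℂ v (Lop a u)}) =
        FIdeal A := by
  refine ⟨alphaMap_injective, le_antisymm ?_ ?_⟩
  · rw [Submodule.map_span, Submodule.span_le]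
    rintro _ ⟨_, ⟨u, v, a, ha, rfl⟩, rfl⟩
    rw [alphaMap_Rop_tmul_sub_tmul_Lop]
    exact Submodule.subset_span ⟨_, a⁻¹, finiteRank_alphaMap_tmul _ _, A.inv_mem ha, rfl⟩
  · rw [FIdeal, Submodule.span_le]
    rintro _ ⟨T, h, hT, hh, rfl⟩
    obtain ⟨z, rfl⟩ := exists_alphaMap_eq_of_finiteRank hT
    rw [opAct_alphaMap, ← map_sub]
    exact Submodule.mem_map_of_mem (sub_map_mem_balancingSpan hh z)

/-- Let `A` be a subgroup of a countable group `G` and let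
`α : ℓ²(G) ⊗_ℂ ℓ²(G) → B(ℓ²(G))` be the injective linear map with
`α(v ⊗ u)(x) = ⟨x, u*⟩ v`.  Then `α` maps the subspace spanned by the elements
`R_a v ⊗ u − v ⊗ L_a u` (for `u, v ∈ ℓ²(G)`, `a ∈ A`) bijectively onto
`F(ℓ²(G))·I_{ℂ[A]}`. -/
theorem alphaMap_span_eq_fideal (G : Type) [Group G] [Countable G] (A : Subgroup G) :
    Function.Injective (alphaMap G) ∧
      Submodule.map (alphaMap G)
        (Submodule.span ℂ
          {z : TensorProduct ℂ (L2 G) (L2 G) |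
            ∃ (u v : L2 G) (a : G), a ∈ A ∧
              z = TensorProduct.tmul ℂ (Rop a v) u - TensorProduct.tmul ℂ v (Lop a u)}) =
        FIdeal A :=
  alphaMap_span_eq_fideal_general G A
end
end

section
/- Let R be a von Neumann regular unital ring (i.e. for every x ∈ R there exists y ∈ R with xyx = x), and let dim be a Sylvester module rank function on R that is faithful over finitely generated projective left R-modules, meaning that dim(P) = 0 implies P = 0 for every finitely generated projective left R-module P. Then every map α : P → Q between finitely generated projective left R-modules that is full with respect to dim is an isomorphism. -/
noncomputable section

/-- A Sylvester module rank function on a unital ring `R`: an isomorphism-invariant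
assignment of a non-negative real number to every (finitely presented) left `R`-module
such that `dim 0 = 0`, `dim R = 1`, `dim` is additive on direct sums, and
`dim M₁ + dim M₃ ≥ dim M₂ ≥ dim M₃` whenever `M₁ → M₂ → M₃ → 0` is exact. -/
structure SylvesterModuleRankFunction (R : Type) [Ring R] : Type 1 where
  dim : (M : Type) → [AddCommGroup M] → [Module R M] → ℝ
  dim_nonneg : ∀ (M : Type) [AddCommGroup M] [Module R M],
    Module.FinitePresentation R M → 0 ≤ dim M
  dim_congr : ∀ (M N : Type) [AddCommGroup M] [Module R M] [AddCommGroup N] [Module R N],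
    Module.FinitePresentation R M → (M ≃ₗ[R] N) → dim M = dim N
  dim_zero : dim PUnit = 0
  dim_self : dim R = 1
  dim_prod : ∀ (M N : Type) [AddCommGroup M] [Module R M] [AddCommGroup N] [Module R N],
    Module.FinitePresentation R M → Module.FinitePresentation R N →
      dim (M × N) = dim M + dim N
  dim_exact : ∀ (M₁ M₂ M₃ : Type) [AddCommGroup M₁] [Module R M₁]
    [AddCommGroup M₂] [Module R M₂] [AddCommGroup M₃] [Module R M₃],
    Module.FinitePresentation R M₁ → Module.FinitePresentation R M₂ →
    Module.FinitePresentation R M₃ →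
    ∀ (f : M₁ →ₗ[R] M₂) (g : M₂ →ₗ[R] M₃), Function.Surjective g →
      LinearMap.range f = LinearMap.ker g →
      dim M₂ ≤ dim M₁ + dim M₃ ∧ dim M₃ ≤ dim M₂

/-- The rank `dim(α)` of a map `α : P → Q` of modules with respect to a Sylvester module
rank function: the infimum of `dim P'` over all finitely generated projective left
`R`-modules `P'` through which `α` factors. -/
def SylvesterModuleRankFunction.dimMap {R : Type} [Ring R]
    (d : SylvesterModuleRankFunction R)
    {P Q : Type} [AddCommGroup P] [Module R P] [AddCommGroup Q] [Module R Q]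
    (α : P →ₗ[R] Q) : ℝ :=
  sInf {x : ℝ | ∃ P' : ModuleCat.{0} R,
    Module.Finite R P' ∧ Module.Projective R P' ∧
      (∃ (β : P →ₗ[R] P') (γ : P' →ₗ[R] Q), γ.comp β = α) ∧ d.dim P' = x}

/-- `α` is a full map with respect to `d`: `dim P = dim α = dim Q`. -/
def SylvesterModuleRankFunction.IsFull {R : Type} [Ring R]
    (d : SylvesterModuleRankFunction R)
    {P Q : Type} [AddCommGroup P] [Module R P] [AddCommGroup Q] [Module R Q]
    (α : P →ₗ[R] Q) : Prop :=
  d.dim P = d.dimMap α ∧ d.dimMap α = d.dim Q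

end

/-
Over a von Neumann regular ring every finitely generated submodule of a finitely generated
projective module is a direct summand: a cyclic left ideal `R a` is generated by the idempotent
`y a`, the modular law passes complements from cyclic to finitely generated submodules, and the
property is inherited by submodules and by products with a projective factor, hence by `Rⁿ` and
its summands. So the image `N` of `α` gives `Q ≅ N ⊕ C` and, `N` being projective,
`P ≅ ker α ⊕ N`. Since `α` factors through `N`, fullness gives `dim P ≤ dim N` and
`dim Q ≤ dim N`, which forces `dim (ker α) = 0 = dim C`; faithfulness then kills `ker α` and `C`.
-/

open LinearMap Submodule

section Complements

variable {R M N : Type*} [Ring R] [AddCommGroup M] [Module R M] [AddCommGroup N] [Module R N]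

theorem Submodule.finite_of_isCompl [Module.Finite R M] {p q : Submodule R M} (h : IsCompl p q) :
    Module.Finite R p :=
  Module.Finite.of_surjective _ (p.projectionOnto_surjective h)

theorem Submodule.projective_of_isCompl [Module.Projective R M] {p q : Submodule R M}
    (h : IsCompl p q) : Module.Projective R p :=
  .of_split p.subtype (p.projectionOnto q h) (p.projectionOnto_comp_subtype h)

theorem LinearMap.isComplemented_ker_of_surjective [Module.Projective R N] {g : M →ₗ[R] N}
    (hg : Function.Surjective g) : IsComplemented (ker g) := by
  obtain ⟨s, hs⟩ := g.exists_rightInverse_of_surjective (range_eq_top.2 hg)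
  have hidem : IsIdempotentElem (s ∘ₗ g) := by
    rw [IsIdempotentElem, Module.End.mul_eq_comp, comp_assoc, ← comp_assoc g, hs, id_comp]
  have hs_inj : ker s = ⊥ := ker_eq_bot_of_inverse hs
  refine ⟨range (s ∘ₗ g), ?_⟩
  simpa [ker_comp_of_ker_eq_bot _ hs_inj] using hidem.isCompl.symm

theorem Submodule.sup_span_singleton_eq_of_sub_mem {p : Submodule R M} {x y : M}
    (h : x - y ∈ p) : p ⊔ R ∙ x = p ⊔ R ∙ y := by
  have key : ∀ {x y : M}, x - y ∈ p → p ⊔ R ∙ x ≤ p ⊔ R ∙ y := fun {x y} h =>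
    sup_le le_sup_left <| (span_singleton_le_iff_mem _ _).2 <| sub_add_cancel x y ▸
      add_mem (mem_sup_left h) (mem_sup_right (mem_span_singleton_self y))
  exact le_antisymm (key h) (key (by rwa [← neg_sub, neg_mem_iff]))

end Complements

theorem IsCompl.sup_inf_of_le {α : Type*} [Lattice α] [BoundedOrder α] [IsModularLattice α]
    {a b c k : α} (hac : IsCompl a c) (hbc : b ≤ c) (hbk : IsCompl b k) :
    IsCompl (a ⊔ b) (c ⊓ k) := by
  have hc : b ⊔ c ⊓ k = c := by
    rw [inf_comm, ← sup_inf_assoc_of_le k hbc, hbk.sup_eq_top, top_inf_eq]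
  exact (hbk.disjoint.mono_right inf_le_right).isCompl_sup_left_of_isCompl_sup_right
    (by rwa [hc])

def Module.FGComplemented (R M : Type*) [Ring R] [AddCommGroup M] [Module R M] : Prop :=
  ∀ N : Submodule R M, N.FG → IsComplemented N

namespace Module.FGComplemented

variable {R M M' : Type*} [Ring R] [AddCommGroup M] [Module R M] [AddCommGroup M'] [Module R M']

theorem of_isComplemented_span_singleton (h : ∀ x : M, IsComplemented (R ∙ x)) :
    FGComplemented R M := by
  classical
  rintro _ ⟨S, rfl⟩
  induction S using Finset.induction_on with
  | empty => simpa using isComplemented_bot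
  | insert a S _ ih =>
    obtain ⟨C, hC⟩ := ih
    obtain ⟨s, hs, c, hc, rfl⟩ := mem_sup.mp (hC.sup_eq_top ▸ mem_top : a ∈ span R S ⊔ C)
    obtain ⟨K, hK⟩ := h c
    have hspan : span R ↑(insert (s + c) S) = span R S ⊔ R ∙ c := by
      rw [Finset.coe_insert, span_insert, sup_comm]
      exact sup_span_singleton_eq_of_sub_mem (by rwa [add_sub_cancel_right])
    rw [hspan]
    exact ⟨C ⊓ K, hC.sup_inf_of_le ((span_singleton_le_iff_mem _ _).2 hc) hK⟩

theorem of_injective {f : M →ₗ[R] M'} (hf : Function.Injective f) (h : FGComplemented R M') :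
    FGComplemented R M := by
  intro N hN
  obtain ⟨C, hC⟩ := h (N.map f) (hN.map f)
  refine ⟨C.comap f, disjoint_def.2 fun x hxN hxC => ?_, codisjoint_iff.2 (eq_top_iff.2 ?_)⟩
  · exact hf <| by rw [map_zero]; exact disjoint_def.1 hC.disjoint _ (mem_map_of_mem hxN) hxC
  · intro x _
    obtain ⟨_, ⟨n, hn, rfl⟩, c, hc, hx⟩ :=
      mem_sup.mp (hC.sup_eq_top ▸ mem_top : f x ∈ N.map f ⊔ C)
    have hxn : x - n ∈ C.comap f := by
      rwa [mem_comap, map_sub, ← hx, add_sub_cancel_left]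
    exact sub_add_cancel x n ▸ add_mem (mem_sup_right hxn) (mem_sup_left hn)

end Module.FGComplemented

section Prod

variable {R M₁ M₂ : Type*} [Ring R] [AddCommGroup M₁] [Module R M₁] [AddCommGroup M₂]
  [Module R M₂]

theorem Submodule.fg_comap_inr {N : Submodule R (M₁ × M₂)} (hN : N.FG)
    [Module.FinitePresentation R (N.map (LinearMap.fst R M₁ M₂))] :
    (N.comap (inr R M₁ M₂)).FG := by
  have := Module.Finite.iff_fg.mpr hN
  let g : N →ₗ[R] N.map (LinearMap.fst R M₁ M₂) :=
    (LinearMap.fst R M₁ M₂ ∘ₗ N.subtype).codRestrict _ fun n => mem_map_of_mem n.2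
  have hg : Function.Surjective g := by
    rintro ⟨_, n, hn, rfl⟩
    exact ⟨⟨n, hn⟩, rfl⟩
  convert (Module.FinitePresentation.fg_ker g hg).map (LinearMap.snd R M₁ M₂ ∘ₗ N.subtype)
  ext m
  constructor
  · intro hm
    exact ⟨⟨inr R M₁ M₂ m, hm⟩, by simp [g], rfl⟩
  · rintro ⟨⟨n, hn⟩, hker, rfl⟩
    have hn₁ : n.1 = 0 := by simpa [g] using hker
    simpa [mem_comap, ← hn₁] using hn

theorem Module.FGComplemented.prod [Module.Projective R M₁] (h₁ : FGComplemented R M₁)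
    (h₂ : FGComplemented R M₂) : FGComplemented R (M₁ × M₂) := by
  intro N hN
  obtain ⟨J, hIJ⟩ := h₁ _ (hN.map (LinearMap.fst R M₁ M₂))
  have := Module.Finite.iff_fg.mpr (hN.map (LinearMap.fst R M₁ M₂))
  have := Submodule.projective_of_isCompl hIJ
  have := Module.finitePresentation_of_projective R (N.map (LinearMap.fst R M₁ M₂))
  obtain ⟨L, hKL⟩ := h₂ _ (Submodule.fg_comap_inr hN)
  refine ⟨J.prod L, disjoint_def.2 ?_, codisjoint_iff.2 (eq_top_iff.2 ?_)⟩
  · rintro ⟨m₁, m₂⟩ hm ⟨hm₁, hm₂⟩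
    obtain rfl : m₁ = 0 := disjoint_def.1 hIJ.disjoint _ (mem_map_of_mem hm) hm₁
    obtain rfl : m₂ = 0 :=
      disjoint_def.1 hKL.disjoint _ (show m₂ ∈ N.comap (inr R M₁ M₂) from hm) hm₂
    rfl
  · rintro ⟨m₁, m₂⟩ -
    obtain ⟨_, ⟨n, hn, rfl⟩, j, hj, hm₁⟩ :=
      mem_sup.mp (hIJ.sup_eq_top ▸ mem_top : m₁ ∈ N.map (LinearMap.fst R M₁ M₂) ⊔ J)
    obtain ⟨k, hk, l, hl, hm₂⟩ :=
      mem_sup.mp (hKL.sup_eq_top ▸ mem_top : m₂ - n.2 ∈ N.comap (inr R M₁ M₂) ⊔ L)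
    have hm : (m₁, m₂) = (n + inr R M₁ M₂ k) + (j, l) := by
      ext
      · simp [← hm₁]
      · simp [add_assoc, hm₂]
    rw [hm]
    exact add_mem (mem_sup_left (add_mem hn hk)) (mem_sup_right ⟨hj, hl⟩)

end Prod

def IsVonNeumannRegular (R : Type*) [Ring R] : Prop :=
  ∀ x : R, ∃ y : R, x * y * x = x

namespace IsVonNeumannRegular

variable {R : Type*} [Ring R]

theorem isComplemented_span_singleton (hR : IsVonNeumannRegular R) (a : R) :
    IsComplemented (R ∙ a) := by
  obtain ⟨y, hy⟩ := hR a
  have hidem : y * a * (y * a) = y * a := by rw [mul_assoc, ← mul_assoc a, hy]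
  refine ⟨R ∙ (1 - y * a), disjoint_def.2 fun x hxa hxe => ?_, codisjoint_iff.2 ?_⟩
  · obtain ⟨r, rfl⟩ := mem_span_singleton.1 hxa
    obtain ⟨t, ht⟩ := mem_span_singleton.1 hxe
    calc r • a = r • a * (y * a) := by rw [smul_eq_mul, mul_assoc, ← mul_assoc a, hy]
      _ = t * ((1 - y * a) * (y * a)) := by rw [← ht, smul_eq_mul, mul_assoc]
      _ = 0 := by rw [sub_mul, one_mul, hidem, sub_self, mul_zero]
  · refine (Ideal.eq_top_iff_one _).2 ?_
    have h := add_mem (mem_sup_left (mem_span_singleton.2 ⟨y, rfl⟩) : y * a ∈ (R ∙ a) ⊔ _)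
      (mem_sup_right (mem_span_singleton_self (1 - y * a)))
    rwa [add_sub_cancel] at h

theorem fgComplemented_self (hR : IsVonNeumannRegular R) : Module.FGComplemented R R :=
  .of_isComplemented_span_singleton hR.isComplemented_span_singleton

theorem fgComplemented_pi (hR : IsVonNeumannRegular R) (n : ℕ) :
    Module.FGComplemented R (Fin n → R) := by
  induction n with
  | zero => exact fun N _ => Subsingleton.elim N ⊥ ▸ isComplemented_bot
  | succ n ih =>
    exact .of_injective (Fin.consLinearEquiv R fun _ => R).symm.injective
      (hR.fgComplemented_self.prod ih)

theorem fgComplemented_of_projective (hR : IsVonNeumannRegular R) (M : Type*) [AddCommGroup M]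
    [Module R M] [Module.Finite R M] [Module.Projective R M] : Module.FGComplemented R M := by
  obtain ⟨n, f, hf⟩ := Module.Finite.exists_fin' R M
  obtain ⟨s, hs⟩ := f.exists_rightInverse_of_surjective (range_eq_top.2 hf)
  exact .of_injective (injective_of_comp_eq_id s f hs) (hR.fgComplemented_pi n)

end IsVonNeumannRegular

namespace SylvesterModuleRankFunction

variable {R : Type} [Ring R] (d : SylvesterModuleRankFunction R)

def IsFaithfulOnFGProjectives : Prop :=
  ∀ (P : Type) [AddCommGroup P] [Module R P],
    Module.Finite R P → Module.Projective R P → d.dim P = 0 → Subsingleton P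

theorem dimMap_le_of_comp_eq {P Q P' : Type} [AddCommGroup P] [Module R P] [AddCommGroup Q]
    [Module R Q] [AddCommGroup P'] [Module R P'] [Module.Finite R P'] [Module.Projective R P']
    {α : P →ₗ[R] Q} (β : P →ₗ[R] P') (γ : P' →ₗ[R] Q) (h : γ ∘ₗ β = α) :
    d.dimMap α ≤ d.dim P' := by
  refine csInf_le ⟨0, ?_⟩ ⟨ModuleCat.of R P', ‹_›, ‹_›, ⟨β, γ, h⟩, rfl⟩
  rintro _ ⟨P'', _, _, -, rfl⟩
  exact d.dim_nonneg _ (Module.finitePresentation_of_projective R P'')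

theorem dim_eq_add_of_isCompl {M : Type} [AddCommGroup M] [Module R M] [Module.Finite R M]
    [Module.Projective R M] {A B : Submodule R M} (h : IsCompl A B) :
    d.dim M = d.dim A + d.dim B := by
  have := Submodule.finite_of_isCompl h
  have := Submodule.projective_of_isCompl h
  have := Submodule.finite_of_isCompl h.symm
  have := Submodule.projective_of_isCompl h.symm
  rw [d.dim_congr _ _ (Module.finitePresentation_of_projective R M)
      (A.prodEquivOfIsCompl B h).symm,
    d.dim_prod _ _ (Module.finitePresentation_of_projective R A)
      (Module.finitePresentation_of_projective R B)]

theorem eq_bot_of_isCompl (hd : d.IsFaithfulOnFGProjectives) {M : Type} [AddCommGroup M]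
    [Module R M] [Module.Finite R M] [Module.Projective R M] {A B : Submodule R M} (h : IsCompl A B)
    (hA : d.dim A ≤ 0) : A = ⊥ := by
  have := Submodule.finite_of_isCompl h
  have := Submodule.projective_of_isCompl h
  refine subsingleton_iff_eq_bot.1 <| hd A ‹_› ‹_› <| le_antisymm hA ?_
  exact d.dim_nonneg A (Module.finitePresentation_of_projective R A)

theorem bijective_of_isFull_of_isCompl_range (hd : d.IsFaithfulOnFGProjectives) {P Q : Type}
    [AddCommGroup P] [Module R P] [Module.Finite R P] [Module.Projective R P] [AddCommGroup Q]
    [Module R Q] [Module.Finite R Q] [Module.Projective R Q] {α : P →ₗ[R] Q}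
    {C : Submodule R Q} (hC : IsCompl (range α) C) (hα : d.IsFull α) :
    Function.Bijective α := by
  have := Submodule.finite_of_isCompl hC
  have := Submodule.projective_of_isCompl hC
  obtain ⟨K, hK⟩ := isComplemented_ker_of_surjective α.surjective_rangeRestrict
  rw [ker_rangeRestrict] at hK
  have := Submodule.finite_of_isCompl hK.symm
  have := Submodule.projective_of_isCompl hK.symm
  have hKN : d.dim K = d.dim (range α) :=
    d.dim_congr _ _ (Module.finitePresentation_of_projective R K)
      ((quotientEquivOfIsCompl _ _ hK).symm ≪≫ₗ α.quotKerEquivRange)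
  have hP := d.dim_eq_add_of_isCompl hK
  have hQ := d.dim_eq_add_of_isCompl hC
  have hle : d.dimMap α ≤ d.dim (range α) :=
    d.dimMap_le_of_comp_eq α.rangeRestrict (range α).subtype rfl
  refine ⟨ker_eq_bot.1 (d.eq_bot_of_isCompl hd hK ?_),
    range_eq_top.1 (eq_top_of_isCompl_bot ?_)⟩
  · linarith [hα.1]
  · rwa [← d.eq_bot_of_isCompl hd hC.symm (by linarith [hα.2])]

end SylvesterModuleRankFunction

/-- Let `R` be a von Neumann regular unital ring and `dim` a Sylvester
module rank function on `R` that is faithful over finitely generated projective left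
`R`-modules (`dim P = 0` implies `P = 0`).  Then every full map `α : P → Q` between
finitely generated projective left `R`-modules is an isomorphism. -/
theorem full_map_bijective_of_vonNeumannRegular
    (R : Type) [Ring R] (hreg : ∀ x : R, ∃ y : R, x * y * x = x)
    (d : SylvesterModuleRankFunction R)
    (hfaithful : ∀ (P : Type) [AddCommGroup P] [Module R P],
      Module.Finite R P → Module.Projective R P → d.dim P = 0 → Subsingleton P)
    (P Q : Type) [AddCommGroup P] [Module R P] [AddCommGroup Q] [Module R Q]
    (hPfg : Module.Finite R P) (hPproj : Module.Projective R P)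
    (hQfg : Module.Finite R Q) (hQproj : Module.Projective R Q)
    (α : P →ₗ[R] Q) (hα : d.IsFull α) :
    Function.Bijective α := by
  obtain ⟨C, hC⟩ :=
    IsVonNeumannRegular.fgComplemented_of_projective hreg Q (range α) (fg_range α)
  exact d.bijective_of_isFull_of_isCompl_range hfaithful hC hα
end
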